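/- arXiv:gr-qc/0309070 — 2 statements merged into one kernel-verified Lean document; each statement's English description precedes it below -/
import Mathlib

section
/- Let k > 0, θ₀ < 0, and s₀ ∈ ℝ, and set s₁ = s₀ + k/(−θ₀). There is no function θ : ℝ → ℝ that is differentiable on the closed interval [s₀, s₁] and satisfies θ(s₀) ≤ θ₀ and θ'(s) ≤ −θ(s)²/k for all s ∈ [s₀, s₁]. -/
/-- **Riccati blow-up lemma behind Hawking's trapping condition.**
For `k > 0` and `θ₀ < 0` there is no function `θ` differentiable on the
closed interval `[s₀, s₀ + k/(−θ₀)]` with `θ(s₀) ≤ θ₀` and satisfying the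
Raychaudhuri inequality `θ' ≤ −θ²/k` throughout that interval. -/
theorem riccati_blow_up
    (k θ₀ s₀ : ℝ) (hk : 0 < k) (hθ₀ : θ₀ < 0) :
    ¬ ∃ θ : ℝ → ℝ,
      (∀ s ∈ Set.Icc s₀ (s₀ + k / (-θ₀)), DifferentiableAt ℝ θ s) ∧
      θ s₀ ≤ θ₀ ∧
      (∀ s ∈ Set.Icc s₀ (s₀ + k / (-θ₀)), deriv θ s ≤ -(θ s) ^ 2 / k) := by
  rintro ⟨θ, hdiff, hinit, hineq⟩
  set s₁ := s₀ + k / (-θ₀) with hs₁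
  have hθ₀pos : 0 < -θ₀ := by linarith
  have hlen : 0 < k / (-θ₀) := div_pos hk hθ₀pos
  have hs01 : s₀ ≤ s₁ := by simp [hs₁]; linarith
  set D := Set.Icc s₀ s₁ with hD
  have hconv : Convex ℝ D := convex_Icc _ _
  have hcont : ContinuousOn θ D := fun x hx => (hdiff x hx).continuousAt.continuousWithinAt
  have hintD : interior D ⊆ D := interior_subset
  have hdiffD : DifferentiableOn ℝ θ (interior D) := fun x hx =>
    (hdiff x (hintD hx)).differentiableWithinAt
  -- θ is antitone on D
  have hanti : AntitoneOn θ D := by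
    apply antitoneOn_of_deriv_nonpos hconv hcont hdiffD
    intro x hx
    have h := hineq x (hintD hx)
    have h0 : 0 ≤ (θ x) ^ 2 / k := div_nonneg (sq_nonneg _) hk.le
    rw [neg_div] at h
    linarith
  have hs₀D : s₀ ∈ D := ⟨le_refl _, hs01⟩
  have hs₁D : s₁ ∈ D := ⟨hs01, le_refl _⟩
  -- θ is ≤ θ₀ < 0 on D
  have hneg : ∀ x ∈ D, θ x ≤ θ₀ := fun x hx =>
    le_trans (hanti hs₀D hx hx.1) hinit
  -- g = 1/θ has deriv ≥ 1/k on D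
  have hg : ∀ x ∈ D, HasDerivAt (fun s => (θ s)⁻¹) (-(deriv θ x) / θ x ^ 2) x := by
    intro x hx
    exact ((hdiff x hx).hasDerivAt).inv (by have := hneg x hx; intro h; rw [h] at this; linarith)
  have hgd : ∀ x ∈ D, k⁻¹ ≤ deriv (fun s => (θ s)⁻¹) x := by
    intro x hx
    rw [(hg x hx).deriv]
    have hθx : θ x < 0 := lt_of_le_of_lt (hneg x hx) hθ₀
    have hsq : 0 < θ x ^ 2 := pow_pos (by linarith : 0 < -θ x) 2 |>.trans_eq (by ring)
    rw [le_div_iff₀ hsq, inv_mul_eq_div]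
    have h := hineq x hx
    rw [neg_div] at h
    linarith
  have key := hconv.mul_sub_le_image_sub_of_le_deriv
    (fun x hx => (hg x hx).continuousAt.continuousWithinAt)
    (fun x hx => ((hg x (hintD hx)).differentiableAt).differentiableWithinAt)
    (fun x hx => hgd x (hintD hx)) s₀ hs₀D s₁ hs₁D hs01
  -- key : k⁻¹ * (s₁ - s₀) ≤ (θ s₁)⁻¹ - (θ s₀)⁻¹
  have h1 : k⁻¹ * (s₁ - s₀) = (-θ₀)⁻¹ := by
    rw [show s₁ - s₀ = k / -θ₀ by rw [hs₁]; ring]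
    field_simp
  have hθs₀ : θ s₀ < 0 := lt_of_le_of_lt hinit hθ₀
  have hθs₁ : θ s₁ < 0 := lt_of_le_of_lt (hneg s₁ hs₁D) hθ₀
  have h2 : θ₀⁻¹ ≤ (θ s₀)⁻¹ := (inv_le_inv_of_neg hθ₀ hθs₀).mpr hinit
  have h3 : (θ s₁)⁻¹ < 0 := inv_lt_zero.mpr hθs₁
  have h4 : (-θ₀)⁻¹ = -θ₀⁻¹ := inv_neg
  rw [h1, h4] at key
  linarith
end

section
/- Let k > 0, θ₀ < 0, s₀ ∈ ℝ, and let s₁ be a real number with s₀ ≤ s₁ < s₀ + k/(−θ₀). If θ : ℝ → ℝ is differentiable on [s₀, s₁] with θ(s₀) = θ₀ and θ'(s) ≤ −θ(s)²/k for all s ∈ [s₀, s₁], then for every s ∈ [s₀, s₁] one has θ(s) ≤ k·θ₀/(k + θ₀·(s − s₀)). -/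
/-- **Riccati comparison bound for the expansion scalar.**
If `θ` is differentiable on `[s₀, s₁]` with `s₀ ≤ s₁ < s₀ + k/(−θ₀)`,
`θ(s₀) = θ₀ < 0`, and `θ' ≤ −θ²/k` on `[s₀, s₁]`, then
`θ(s) ≤ k·θ₀/(k + θ₀·(s − s₀))` for all `s ∈ [s₀, s₁]`. -/
theorem riccati_comparison
    (k θ₀ s₀ s₁ : ℝ) (hk : 0 < k) (hθ₀ : θ₀ < 0)
    (hs : s₀ ≤ s₁) (hs₁ : s₁ < s₀ + k / (-θ₀))
    (θ : ℝ → ℝ)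
    (hdiff : ∀ s ∈ Set.Icc s₀ s₁, DifferentiableAt ℝ θ s)
    (hθs₀ : θ s₀ = θ₀)
    (hineq : ∀ s ∈ Set.Icc s₀ s₁, deriv θ s ≤ -(θ s) ^ 2 / k) :
    ∀ s ∈ Set.Icc s₀ s₁, θ s ≤ k * θ₀ / (k + θ₀ * (s - s₀)) := by
  have hcont : ContinuousOn θ (Set.Icc s₀ s₁) := fun s hsI =>
    (hdiff s hsI).continuousAt.continuousWithinAt
  -- θ is antitone, so θ s ≤ θ₀ < 0 on the interval
  have hanti : AntitoneOn θ (Set.Icc s₀ s₁) := by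
    apply antitoneOn_of_deriv_nonpos (convex_Icc s₀ s₁) hcont
    · intro s hsI
      rw [interior_Icc] at hsI
      exact (hdiff s (Set.Ioo_subset_Icc_self hsI)).differentiableWithinAt
    · intro s hsI
      rw [interior_Icc] at hsI
      have h := hineq s (Set.Ioo_subset_Icc_self hsI)
      have h2 : -(θ s) ^ 2 / k ≤ 0 :=
        div_nonpos_of_nonpos_of_nonneg (by nlinarith [sq_nonneg (θ s)]) hk.le
      linarith
  have hneg : ∀ s ∈ Set.Icc s₀ s₁, θ s ≤ θ₀ := by
    intro s hsI
    have := hanti (Set.left_mem_Icc.2 hs) hsI hsI.1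
    rwa [hθs₀] at this
  have hne : ∀ s ∈ Set.Icc s₀ s₁, θ s ≠ 0 := fun s hsI =>
    ne_of_lt (lt_of_le_of_lt (hneg s hsI) hθ₀)
  -- g = 1/θ - s/k is monotone
  set g : ℝ → ℝ := fun s => (θ s)⁻¹ - s / k with hg
  have hder : ∀ s ∈ Set.Icc s₀ s₁,
      HasDerivAt g (-deriv θ s / (θ s) ^ 2 - 1 / k) s := by
    intro s hsI
    exact (((hdiff s hsI).hasDerivAt).inv (hne s hsI)).sub
      ((hasDerivAt_id s).div_const k)
  have hmono : MonotoneOn g (Set.Icc s₀ s₁) := by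
    apply monotoneOn_of_deriv_nonneg (convex_Icc s₀ s₁)
    · intro s hsI
      exact ((hder s hsI).continuousAt).continuousWithinAt
    · intro s hsI
      rw [interior_Icc] at hsI
      exact (hder s (Set.Ioo_subset_Icc_self hsI)).differentiableAt.differentiableWithinAt
    · intro s hsI
      rw [interior_Icc] at hsI
      have hsI' := Set.Ioo_subset_Icc_self hsI
      rw [(hder s hsI').deriv]
      have h1 := hineq s hsI'
      have h2 : 0 < (θ s) ^ 2 := by
        have := hne s hsI'
        positivity
      rw [sub_nonneg, div_le_div_iff₀ hk h2]
      have h1' : deriv θ s * k ≤ -θ s ^ 2 := (le_div_iff₀ hk).mp h1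
      linarith
  intro s hsI
  have hkey := hmono (Set.left_mem_Icc.2 hs) hsI hsI.1
  simp only [hg, hθs₀] at hkey
  -- hkey : θ₀⁻¹ - s₀/k ≤ (θ s)⁻¹ - s/k
  have hD : 0 < k + θ₀ * (s - s₀) := by
    have h1 : s - s₀ < k / (-θ₀) := by linarith [hsI.2]
    have h2 : (s - s₀) * (-θ₀) < k := (lt_div_iff₀ (neg_pos.2 hθ₀)).mp h1
    nlinarith
  have hθs : θ s < 0 := lt_of_le_of_lt (hneg s hsI) hθ₀
  have h : θ₀⁻¹ + (s - s₀) / k ≤ (θ s)⁻¹ := by rw [sub_div]; linarith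
  have hpos : 0 < θ s * θ₀ * k := mul_pos (mul_pos_of_neg_of_neg hθs hθ₀) hk
  have h' := mul_le_mul_of_nonneg_right h hpos.le
  have e1 : (θ₀⁻¹ + (s - s₀) / k) * (θ s * θ₀ * k)
      = θ s * k + (s - s₀) * (θ s * θ₀) := by
    field_simp [hθ₀.ne, hθs.ne]
  have e2 : (θ s)⁻¹ * (θ s * θ₀ * k) = θ₀ * k := by
    field_simp [hθs.ne]
  rw [e1, e2] at h'
  rw [le_div_iff₀ hD]
  nlinarith [h']
end
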